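/- Composite B-spline interpolation of a discretely divergence-free MAC-grid velocity field is continuously divergence-free: let n ≥ 1 be a natural number, h > 0, and let u, v : ℤ × ℤ → ℝ be finitely supported data satisfying the discrete divergence-free condition (u_{i,j} − u_{i−1,j})/h + (v_{i,j} − v_{i,j−1})/h = 0 for all (i,j) ∈ ℤ². Define the composite B-spline interpolants U(x,y) = Σ_{i,j} u_{i,j} φ_{n+1}(x/h − i) φ_n(y/h − j + 1/2) and V(x,y) = Σ_{i,j} v_{i,j} φ_n(x/h − i + 1/2) φ_{n+1}(y/h − j). Then for every (x,y) ∈ ℝ², the partial derivatives ∂U/∂x and ∂V/∂y exist and ∂U/∂x (x,y) + ∂V/∂y (x,y) = 0. -/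

import Mathlib

/-!
Since `φₙ₊₁(x) = ∫_{x-1/2}^{x+1/2} φₙ` and `φₙ` is continuous for `n ≥ 1`, the derivative of
`φₙ₊₁` is the difference `φₙ(x + 1/2) - φₙ(x - 1/2)`. With
`F(i, j) = φₙ(x/h - i + 1/2) φₙ(y/h - j + 1/2) / h` this gives
`∂U/∂x = Σ_p u_p (F(p) - F(p + e₁))` and `∂V/∂y = Σ_p v_p (F(p) - F(p + e₂))`: both derivatives
are differences of the same function. Summation by parts moves the differences onto the data,
where they form the discrete divergence, which vanishes.
-/

open MeasureTheory

/-- The centered cardinal B-spline: `bspline 0` is the indicator of `(-1/2, 1/2)`,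
and `bspline (n+1) x = ∫_{-1/2}^{1/2} bspline n (x - y) dy`. -/
noncomputable def bspline : ℕ → ℝ → ℝ
  | 0 => Set.indicator (Set.Ioo (-(1/2) : ℝ) (1/2)) (fun _ => 1)
  | n + 1 => fun x => ∫ y in (-(1/2) : ℝ)..(1/2), bspline n (x - y)

theorem intervalIntegral_sub_add_eq_sub {f : ℝ → ℝ}
    (hf : ∀ a b : ℝ, IntervalIntegrable f volume a b) (c x : ℝ) :
    ∫ t in (x - c)..(x + c), f t = (∫ t in (0 : ℝ)..(x + c), f t) - ∫ t in (0 : ℝ)..(x - c), f t :=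
  (intervalIntegral.integral_interval_sub_left (hf _ _) (hf _ _)).symm

theorem continuous_intervalIntegral_sub_add {f : ℝ → ℝ}
    (hf : ∀ a b : ℝ, IntervalIntegrable f volume a b) (c : ℝ) :
    Continuous fun x => ∫ t in (x - c)..(x + c), f t := by
  have hprim := intervalIntegral.continuous_primitive hf 0
  simp only [intervalIntegral_sub_add_eq_sub hf c]
  exact (hprim.comp (continuous_add_const c)).sub (hprim.comp (continuous_sub_right c))

theorem hasDerivAt_intervalIntegral_sub_add {f : ℝ → ℝ} (hf : Continuous f) (c x : ℝ) :
    HasDerivAt (fun x => ∫ t in (x - c)..(x + c), f t) (f (x + c) - f (x - c)) x := by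
  have hupper := (hf.integral_hasStrictDerivAt 0 (x + c)).hasDerivAt.comp_add_const x c
  have hlower := (hf.integral_hasStrictDerivAt 0 (x - c)).hasDerivAt.comp_sub_const x c
  simp only [intervalIntegral_sub_add_eq_sub hf.intervalIntegrable c]
  exact hupper.sub hlower

theorem bspline_succ_eq_integral (n : ℕ) (x : ℝ) :
    bspline (n + 1) x = ∫ t in (x - 1/2)..(x + 1/2), bspline n t := by
  simp only [bspline]
  rw [intervalIntegral.integral_comp_sub_left (bspline n) x]
  norm_num

theorem continuous_bspline_succ_of_intervalIntegrable {n : ℕ}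
    (hn : ∀ a b : ℝ, IntervalIntegrable (bspline n) volume a b) :
    Continuous (bspline (n + 1)) := by
  rw [funext (bspline_succ_eq_integral n)]
  exact continuous_intervalIntegral_sub_add hn _

theorem intervalIntegrable_bspline (n : ℕ) (a b : ℝ) :
    IntervalIntegrable (bspline n) volume a b := by
  induction n generalizing a b with
  | zero =>
    refine Integrable.intervalIntegrable ?_
    exact (integrable_indicator_iff measurableSet_Ioo).2 (integrableOn_const measure_Ioo_lt_top.ne)
  | succ n ih => exact (continuous_bspline_succ_of_intervalIntegrable ih).intervalIntegrable a b

theorem continuous_bspline_succ (n : ℕ) : Continuous (bspline (n + 1)) :=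
  continuous_bspline_succ_of_intervalIntegrable (intervalIntegrable_bspline n)

theorem hasDerivAt_bspline_succ {n : ℕ} (hn : n ≠ 0) (x : ℝ) :
    HasDerivAt (bspline (n + 1)) (bspline n (x + 1/2) - bspline n (x - 1/2)) x := by
  obtain ⟨m, rfl⟩ := Nat.exists_eq_succ_of_ne_zero hn
  rw [funext (bspline_succ_eq_integral (m + 1))]
  exact hasDerivAt_intervalIntegral_sub_add (continuous_bspline_succ m) (1/2) x

theorem hasDerivAt_bspline_succ_div_sub {n : ℕ} (hn : n ≠ 0) (h c x : ℝ) :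
    HasDerivAt (fun t => bspline (n + 1) (t / h - c))
      ((bspline n (x / h - c + 1/2) - bspline n (x / h - c - 1/2)) / h) x := by
  have hinner : HasDerivAt (fun t => t / h - c) (1 / h) x :=
    ((hasDerivAt_id' x).div_const h).sub_const c
  have hcomp := (hasDerivAt_bspline_succ hn (x / h - c)).comp x hinner
  rwa [mul_one_div] at hcomp

theorem hasDerivAt_tsum_mul_of_finite_support {ι : Type*} {w : ι → ℝ}
    (hw : (Function.support w).Finite) {φ : ι → ℝ → ℝ} {φ' : ι → ℝ} {x : ℝ}
    (hφ : ∀ i, HasDerivAt (φ i) (φ' i) x) :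
    HasDerivAt (fun t => ∑' i, w i * φ i t) (∑' i, w i * φ' i) x := by
  have hsum (g : ι → ℝ) : ∑' i, w i * g i = ∑ i ∈ hw.toFinset, w i * g i :=
    tsum_eq_sum fun i hi => by
      have hwi : w i = 0 := by simpa using hi
      rw [hwi, zero_mul]
  simp only [hsum]
  exact HasDerivAt.fun_sum fun i _ => (hφ i).const_mul (w i)

theorem tsum_mul_sub_add_eq_tsum_sub_mul {G : Type*} [AddCommGroup G] {w : G → ℝ}
    (hw : (Function.support w).Finite) (f : G → ℝ) (e : G) :
    ∑' p, w p * (f p - f (p + e)) = ∑' p, (w p - w (p - e)) * f p := by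
  have hsum : Summable fun p => w p * f p :=
    summable_of_hasFiniteSupport (Function.HasFiniteSupport.mul_left hw f)
  have hsum_add : Summable fun p => w p * f (p + e) :=
    summable_of_hasFiniteSupport (Function.HasFiniteSupport.mul_left hw _)
  have hshift : ∑' p, w p * f (p + e) = ∑' p, w (p - e) * f p := by
    simpa using (Equiv.addRight e).tsum_eq fun p => w (p - e) * f p
  have hsum_sub : Summable fun p => w (p - e) * f p := by
    rw [← (Equiv.addRight e).summable_iff]
    simpa [Function.comp_def] using hsum_add
  simp only [mul_sub, sub_mul, hsum.tsum_sub hsum_add, hsum.tsum_sub hsum_sub, hshift]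

theorem composite_bspline_divergence_free_general (n : ℕ) (hn : 1 ≤ n) (h : ℝ)
    (u v : ℤ × ℤ → ℝ) (hu : (Function.support u).Finite) (hv : (Function.support v).Finite)
    (hdiv : ∀ i j : ℤ, (u (i, j) - u (i - 1, j)) / h + (v (i, j) - v (i, j - 1)) / h = 0) :
    ∀ x y : ℝ, ∃ a b : ℝ,
      HasDerivAt
        (fun t : ℝ => ∑' p : ℤ × ℤ,
          u p * (bspline (n + 1) (t / h - p.1) * bspline n (y / h - p.2 + 1/2))) a x ∧
      HasDerivAt
        (fun t : ℝ => ∑' p : ℤ × ℤ,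
          v p * (bspline n (x / h - p.1 + 1/2) * bspline (n + 1) (t / h - p.2))) b y ∧
      a + b = 0 := by
  intro x y
  have hn0 : n ≠ 0 := by omega
  set F : ℤ × ℤ → ℝ := fun p => bspline n (x / h - p.1 + 1/2) * bspline n (y / h - p.2 + 1/2) / h
  refine ⟨∑' p, u p * (F p - F (p + (1, 0))), ∑' p, v p * (F p - F (p + (0, 1))),
    hasDerivAt_tsum_mul_of_finite_support hu fun p => ?_,
    hasDerivAt_tsum_mul_of_finite_support hv fun p => ?_, ?_⟩
  · refine ((hasDerivAt_bspline_succ_div_sub hn0 h p.1 x).mul_const _).congr_deriv ?_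
    simp only [F, Prod.fst_add, Prod.snd_add, add_zero]
    push_cast
    ring_nf
  · refine ((hasDerivAt_bspline_succ_div_sub hn0 h p.2 y).const_mul _).congr_deriv ?_
    simp only [F, Prod.fst_add, Prod.snd_add, add_zero]
    push_cast
    ring_nf
  have hcancel : ∑' p, (v p - v (p - (0, 1))) * F p = -∑' p, (u p - u (p - (1, 0))) * F p := by
    rw [← tsum_neg]
    congr 1
    ext ⟨i, j⟩
    simp only [F, Prod.mk_sub_mk, sub_zero]
    linear_combination (bspline n (x / h - i + 1/2) * bspline n (y / h - j + 1/2)) * hdiv i j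
  rw [tsum_mul_sub_add_eq_tsum_sub_mul hu, tsum_mul_sub_add_eq_tsum_sub_mul hv, hcancel,
    add_neg_cancel]

/-- Composite B-spline interpolation of a discretely divergence-free MAC-grid velocity
field is continuously divergence-free: the partial derivatives `∂U/∂x` and `∂V/∂y`
exist at every point and sum to zero. -/
theorem composite_bspline_divergence_free (n : ℕ) (hn : 1 ≤ n) (h : ℝ) (hh : 0 < h)
    (u v : ℤ × ℤ → ℝ) (hu : (Function.support u).Finite) (hv : (Function.support v).Finite)
    (hdiv : ∀ i j : ℤ, (u (i, j) - u (i - 1, j)) / h + (v (i, j) - v (i, j - 1)) / h = 0) :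
    ∀ x y : ℝ, ∃ a b : ℝ,
      HasDerivAt
        (fun t : ℝ => ∑' p : ℤ × ℤ,
          u p * (bspline (n + 1) (t / h - p.1) * bspline n (y / h - p.2 + 1/2))) a x ∧
      HasDerivAt
        (fun t : ℝ => ∑' p : ℤ × ℤ,
          v p * (bspline n (x / h - p.1 + 1/2) * bspline (n + 1) (t / h - p.2))) b y ∧
      a + b = 0 :=
  composite_bspline_divergence_free_general n hn h u v hu hv hdiv
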